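/- Let U be a d×d orthogonal matrix and W_γ = diag(γ). Then RMSNorm(γ, cU) Uᵀ = RMSNorm(𝟙, c) · (U W_γ Uᵀ) for every nonzero c ∈ ℝ^d, and this equals RMSNorm(γ, c) for all c if and only if U W_γ Uᵀ = W_γ. -/
import Mathlib

open Matrix

/-- Unit/scaled RMSNorm with ε = 0: `(x / sqrt((1/d)‖x‖²)) ⊙ γ`. -/
noncomputable def rmsNormScaled (d : ℕ) (γ x : Fin d → ℝ) : Fin d → ℝ :=
  fun i => (x i / Real.sqrt ((1 / (d : ℝ)) * ∑ j, (x j) ^ 2)) * γ i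

lemma sumsq_vecMul (d : ℕ) (U : Matrix (Fin d) (Fin d) ℝ)
    (hU : U * Uᵀ = 1) (c : Fin d → ℝ) :
    ∑ j, (Matrix.vecMul c U j) ^ 2 = ∑ j, (c j) ^ 2 := by
  have h : Matrix.vecMul c U ⬝ᵥ Matrix.vecMul c U = c ⬝ᵥ c := by
    calc Matrix.vecMul c U ⬝ᵥ Matrix.vecMul c U
        = Matrix.vecMul c U ⬝ᵥ Uᵀ.mulVec c := by rw [Matrix.mulVec_transpose]
      _ = Matrix.vecMul (Matrix.vecMul c U) Uᵀ ⬝ᵥ c := by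
          rw [Matrix.dotProduct_mulVec]
      _ = c ⬝ᵥ c := by rw [Matrix.vecMul_vecMul, hU, Matrix.vecMul_one]
  simpa [dotProduct, sq] using h

theorem rmsNorm_conjugation (d : ℕ) (U : Matrix (Fin d) (Fin d) ℝ)
    (hU : U * Uᵀ = 1) (γ : Fin d → ℝ) :
    (∀ c : Fin d → ℝ, c ≠ 0 →
        Matrix.vecMul (rmsNormScaled d γ (Matrix.vecMul c U)) Uᵀ =
          Matrix.vecMul (rmsNormScaled d (fun _ => 1) c)
            (U * Matrix.diagonal γ * Uᵀ)) ∧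
      ((∀ c : Fin d → ℝ, c ≠ 0 →
          Matrix.vecMul (rmsNormScaled d γ (Matrix.vecMul c U)) Uᵀ =
            rmsNormScaled d γ c) ↔
        U * Matrix.diagonal γ * Uᵀ = Matrix.diagonal γ) := by
  have key : ∀ c : Fin d → ℝ,
      Matrix.vecMul (rmsNormScaled d γ (Matrix.vecMul c U)) Uᵀ =
        Matrix.vecMul (rmsNormScaled d (fun _ => 1) c)
          (U * Matrix.diagonal γ * Uᵀ) := by
    intro c
    have hs := sumsq_vecMul d U hU c
    have h1 : rmsNormScaled d γ (Matrix.vecMul c U) =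
        Matrix.vecMul (rmsNormScaled d (fun _ => 1) c) (U * Matrix.diagonal γ) := by
      funext i
      have : rmsNormScaled d (fun _ => 1) c =
          (Real.sqrt ((1 / (d : ℝ)) * ∑ j, (c j) ^ 2))⁻¹ • c := by
        funext j; simp [rmsNormScaled, div_eq_inv_mul, mul_comm]
      rw [this, ← Matrix.vecMul_vecMul, Matrix.vecMul_diagonal,
        Matrix.smul_vecMul]
      simp [rmsNormScaled, hs, div_eq_inv_mul, mul_comm, mul_assoc, mul_left_comm]
    rw [h1, Matrix.vecMul_vecMul, Matrix.mul_assoc]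
  have hdiag : ∀ c : Fin d → ℝ, rmsNormScaled d γ c =
      Matrix.vecMul (rmsNormScaled d (fun _ => 1) c) (Matrix.diagonal γ) := by
    intro c; funext j
    simp [rmsNormScaled, Matrix.vecMul_diagonal]
  refine ⟨fun c _ => key c, ?_, ?_⟩
  · intro h
    ext i j
    have hd : 0 < (d : ℝ) := by
      have : (0:ℕ) < d := i.pos
      exact_mod_cast this
    set c : Fin d → ℝ := Pi.single i 1 with hc
    have hc0 : c ≠ 0 := by
      intro hz
      have := congrFun hz i
      simp [hc] at this
    have hsum : ∑ j, (c j) ^ 2 = 1 := by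
      simp [hc, Pi.single_apply, sq]
    have hspos : 0 < Real.sqrt ((1 / (d : ℝ)) * ∑ j, (c j) ^ 2) := by
      rw [hsum]
      positivity
    have h2 := (key c).symm.trans (h c hc0)
    rw [hdiag c] at h2
    have hunit : rmsNormScaled d (fun _ => 1) c =
        (Real.sqrt ((1 / (d : ℝ)) * ∑ j, (c j) ^ 2))⁻¹ • c := by
      funext k; simp [rmsNormScaled, div_eq_inv_mul, mul_comm]
    rw [hunit, Matrix.smul_vecMul, Matrix.smul_vecMul] at h2
    have h3 : Matrix.vecMul c (U * Matrix.diagonal γ * Uᵀ) =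
        Matrix.vecMul c (Matrix.diagonal γ) :=
      smul_right_injective _ (inv_ne_zero hspos.ne') h2
    have h4 := congrFun h3 j
    simpa [hc, Matrix.vecMul, dotProduct, Pi.single_apply] using h4
  · intro h c hc
    rw [key c, h, ← hdiag c]
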